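/- arXiv:math/0610592 — 2 statements merged into one kernel-verified Lean document; each statement's English description precedes it below -/
import Mathlib

section
/- For every n ≥ 1, the 2n × 2n skew-symmetric moment matrix M with entries M_{ij} = ⟨x^i, y^j⟩₁ for 0 ≤ i, j ≤ 2n−1 is invertible (its determinant is nonzero). -/
open MeasureTheory Polynomial

/-- The skew-inner product `⟨f,g⟩₁ = ∬ f(x) g(y) ε(x−y) e^{−V(x)−V(y)} dx dy`. -/
noncomputable def skewInner (V f g : Polynomial ℝ) : ℝ :=
  ∫ p : ℝ × ℝ, f.eval p.1 * g.eval p.2 * Real.sign (p.1 - p.2) *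
    Real.exp (-V.eval p.1 - V.eval p.2)

open Filter Set

namespace SkewAux

noncomputable def w (V : Polynomial ℝ) (x : ℝ) : ℝ := Real.exp (-V.eval x)

lemma w_pos (V : Polynomial ℝ) (x : ℝ) : 0 < w V x := Real.exp_pos _

lemma continuous_w (V : Polynomial ℝ) : Continuous (w V) :=
  Real.continuous_exp.comp (V.continuous_aeval.neg)

lemma tendsto_eval_sub_linear (V : Polynomial ℝ) (hdeg : 2 ≤ V.natDegree)
    (hlc : 0 < V.leadingCoeff) (c : ℝ) :
    Tendsto (fun x => V.eval x - c * x) atTop atTop := by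
  have hV0 : V ≠ 0 := fun h => by simp [h] at hlc
  have hVdeg : 1 < V.degree := by
    rw [Polynomial.degree_eq_natDegree hV0]
    exact_mod_cast lt_of_lt_of_le one_lt_two hdeg
  have hd : (Polynomial.C c * Polynomial.X : Polynomial ℝ).degree < V.degree :=
    lt_of_le_of_lt (Polynomial.degree_C_mul_X_le c) hVdeg
  set W : Polynomial ℝ := -(Polynomial.C c * Polynomial.X) + V with hW
  have hdW : 0 < W.degree := by
    rw [hW, Polynomial.degree_add_eq_right_of_degree_lt (by rwa [Polynomial.degree_neg])]
    exact lt_trans zero_lt_one hVdeg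
  have hlcW : 0 ≤ W.leadingCoeff := by
    rw [hW, Polynomial.leadingCoeff_add_of_degree_lt (by rwa [Polynomial.degree_neg])]
    exact hlc.le
  have := Polynomial.tendsto_atTop_of_leadingCoeff_nonneg W hdW hlcW
  refine this.congr fun x => ?_
  simp [hW, sub_eq_neg_add]

lemma eventually_bound (V : Polynomial ℝ) (hdeg : 2 ≤ V.natDegree)
    (hlc : 0 < V.leadingCoeff) (p : Polynomial ℝ) :
    ∀ᶠ x in atTop, ‖p.eval x * w V x‖ ≤ Real.exp (-x) := by
  have h2 := (tendsto_eval_sub_linear V hdeg hlc 2).eventually_ge_atTop 0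
  have h3 : Tendsto (fun x => |p.eval x / Real.exp x|) atTop (nhds 0) := by
    simpa using (p.tendsto_div_exp_atTop).abs
  filter_upwards [h2, h3.eventually (gt_mem_nhds one_pos)] with x hx hb
  have hpe : |p.eval x| ≤ Real.exp x := by
    rw [abs_div, div_lt_one (by positivity)] at hb
    calc |p.eval x| ≤ |Real.exp x| := hb.le
    _ = Real.exp x := abs_of_pos (Real.exp_pos x)
  have : ‖p.eval x * w V x‖ = |p.eval x| * Real.exp (-V.eval x) := by
    rw [Real.norm_eq_abs, abs_mul, w, abs_of_pos (Real.exp_pos _)]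
  rw [this]
  calc |p.eval x| * Real.exp (-V.eval x) ≤ Real.exp x * Real.exp (-(2*x)) := by
        apply mul_le_mul hpe (Real.exp_le_exp.mpr (by linarith)) (Real.exp_pos _).le
          (Real.exp_pos _).le
  _ = Real.exp (-x) := by rw [← Real.exp_add]; ring_nf

lemma integrableOn_Ioi_pw (V : Polynomial ℝ) (hdeg : 2 ≤ V.natDegree)
    (hlc : 0 < V.leadingCoeff) (p : Polynomial ℝ) :
    ∃ a : ℝ, IntegrableOn (fun x => p.eval x * w V x) (Ioi a) volume := by
  obtain ⟨a, ha⟩ := (eventually_bound V hdeg hlc p).exists_forall_of_atTop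
  refine ⟨a, ?_⟩
  have hexp : IntegrableOn (fun x : ℝ => Real.exp (-x)) (Ioi a) volume := by
    simpa using exp_neg_integrableOn_Ioi a one_pos
  refine Integrable.mono' hexp ?_ ?_
  · exact (((p.continuous_aeval).mul (continuous_w V)).aestronglyMeasurable).restrict
  · filter_upwards [ae_restrict_mem measurableSet_Ioi] with x hx
    exact ha x (le_of_lt hx)

lemma integrable_pw (V : Polynomial ℝ) (hEven : Even V.natDegree) (hdeg : 2 ≤ V.natDegree)
    (hlc : 0 < V.leadingCoeff) (p : Polynomial ℝ) :
    Integrable (fun x => p.eval x * w V x) := by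
  obtain ⟨a, ha⟩ := integrableOn_Ioi_pw V hdeg hlc p
  -- reflected polynomial
  set V' := V.comp (-Polynomial.X) with hV'
  set p' := p.comp (-Polynomial.X) with hp'
  have hnd : V'.natDegree = V.natDegree := by
    rw [hV', Polynomial.natDegree_comp]
    simp
  have hlc' : 0 < V'.leadingCoeff := by
    rw [hV', Polynomial.leadingCoeff_comp (by simp)]
    simp only [Polynomial.leadingCoeff_neg, Polynomial.leadingCoeff_X]
    rw [hEven.neg_one_pow]
    simpa using hlc
  obtain ⟨b, hb⟩ := integrableOn_Ioi_pw V' (by rw [hnd]; exact hdeg) hlc' p'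
  have hb' : IntegrableOn (fun x => p.eval x * w V x) (Iio (-b)) volume := by
    have heq : (fun x : ℝ => p'.eval x * w V' x) = (fun x => p.eval x * w V x) ∘ (fun y : ℝ => -y) := by
      funext x
      simp [hp', hV', w, Polynomial.eval_comp, Function.comp]
    rw [heq] at hb
    have := (Measure.measurePreserving_neg (volume : Measure ℝ)).integrableOn_comp_preimage
      (Homeomorph.neg ℝ).measurableEmbedding (f := fun x => p.eval x * w V x) (s := Iio (-b))
    rw [← this]
    simpa using hb
  have hmid : IntegrableOn (fun x => p.eval x * w V x) (Icc (-b) a) volume :=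
    ((p.continuous_aeval).mul (continuous_w V)).integrableOn_Icc
  have : IntegrableOn (fun x => p.eval x * w V x) (Iio (-b) ∪ (Icc (-b) a ∪ Ioi a)) volume :=
    hb'.union (hmid.union ha)
  rw [← integrableOn_univ]
  apply this.mono_set
  intro x _
  rcases lt_or_ge x (-b) with h | h
  · exact Or.inl h
  · rcases le_or_gt x a with h2 | h2
    · exact Or.inr (Or.inl ⟨h, h2⟩)
    · exact Or.inr (Or.inr h2)


/-- eventual positivity of a nonzero polynomial times its leading coeff -/
lemma eventually_pos_mul_leadingCoeff {q : Polynomial ℝ} (hq : q ≠ 0) :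
    ∀ᶠ x in atTop, 0 < q.eval x * q.leadingCoeff := by
  rcases eq_or_ne q.natDegree 0 with h0 | h0
  · obtain ⟨c, rfl⟩ := Polynomial.natDegree_eq_zero.mp h0
    have hc : c ≠ 0 := fun h => hq (by simp [h])
    filter_upwards with x
    simp only [Polynomial.eval_C, Polynomial.leadingCoeff_C]
    rcases hc.lt_or_gt with h | h
    · exact mul_pos_of_neg_of_neg h h
    · exact mul_pos h h
  · have hlc : q.leadingCoeff ≠ 0 := Polynomial.leadingCoeff_ne_zero.mpr hq
    have hdeg : 0 < (q * Polynomial.C q.leadingCoeff).degree := by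
      rw [Polynomial.degree_mul_C hlc]
      exact Polynomial.natDegree_pos_iff_degree_pos.mp (Nat.pos_of_ne_zero h0)
    have hnn : 0 ≤ (q * Polynomial.C q.leadingCoeff).leadingCoeff := by
      rw [Polynomial.leadingCoeff_mul, Polynomial.leadingCoeff_C]
      exact mul_self_nonneg _
    have := Polynomial.tendsto_atTop_of_leadingCoeff_nonneg _ hdeg hnn
    filter_upwards [this.eventually_gt_atTop 0] with x hx
    simpa using hx


lemma measurable_sign : Measurable Real.sign := by
  have : Real.sign = fun r : ℝ => if r < 0 then (-1 : ℝ) else if 0 < r then 1 else 0 := by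
    funext r; rfl
  rw [this]
  exact Measurable.ite measurableSet_Iio measurable_const
    (Measurable.ite measurableSet_Ioi measurable_const measurable_const)

lemma abs_sign_le (r : ℝ) : |Real.sign r| ≤ 1 := by
  rcases Real.sign_apply_eq r with h | h | h <;> rw [h] <;> norm_num


lemma abs_le_sq_add_one (u : ℝ) : |u| ≤ u ^ 2 + 1 := by nlinarith [abs_nonneg u, sq_abs u]


noncomputable def Ff (V f : Polynomial ℝ) (y : ℝ) : ℝ :=
  ∫ x, f.eval x * Real.sign (x - y) * w V x

noncomputable def Av (V f : Polynomial ℝ) (y : ℝ) : ℝ :=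
  ∫ x in Iic y, f.eval x * w V x

noncomputable def It (V f : Polynomial ℝ) : ℝ := ∫ x, f.eval x * w V x


/-- IVT: a continuous function with no zero on `uIcc a b` has the same sign at `a` and `b`. -/
lemma pair_pos {h : ℝ → ℝ} (hc : Continuous h) {a b : ℝ}
    (hno : ∀ z ∈ uIcc a b, h z ≠ 0) : 0 < h a * h b := by
  rcases lt_trichotomy (h a * h b) 0 with hlt | heq | hgt
  · exfalso
    have h0 : (0:ℝ) ∈ uIcc (h a) (h b) := by
      rcases mul_neg_iff.mp hlt with ⟨h1, h2⟩ | ⟨h1, h2⟩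
      · exact mem_uIcc.mpr (Or.inr ⟨h2.le, h1.le⟩)
      · exact mem_uIcc.mpr (Or.inl ⟨h1.le, h2.le⟩)
    obtain ⟨z, hz, hz0⟩ := intermediate_value_uIcc hc.continuousOn h0
    exact hno z hz hz0
  · exfalso
    rcases mul_eq_zero.mp heq with h1 | h1
    · exact hno a left_mem_uIcc h1
    · exact hno b right_mem_uIcc h1
  · exact hgt

lemma integral_Ioc_pos {h : ℝ → ℝ} (hc : Continuous h) (hint : Integrable h)
    {a b : ℝ} (hab : a < b) (hpos : ∀ x ∈ Ioo a b, 0 < h x) :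
    0 < ∫ x in Ioc a b, h x := by
  rw [← setIntegral_congr_set (Ioo_ae_eq_Ioc (μ := volume) (a := a) (b := b))]
  rw [setIntegral_pos_iff_support_of_nonneg_ae]
  · rw [show Function.support h ∩ Ioo a b = Ioo a b from
      inter_eq_right.mpr fun x hx => (hpos x hx).ne']
    rw [Real.volume_Ioo]
    simp [hab, sub_pos]
  · filter_upwards [ae_restrict_mem measurableSet_Ioo] with x hx
    exact (hpos x hx).le
  · exact hint.integrableOn

lemma integral_Iic_pos {h : ℝ → ℝ} (hint : Integrable h)
    {a : ℝ} (hpos : ∀ x ∈ Iic a, 0 < h x) :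
    0 < ∫ x in Iic a, h x := by
  rw [setIntegral_pos_iff_support_of_nonneg_ae]
  · rw [show Function.support h ∩ Iic a = Iic a from
      inter_eq_right.mpr fun x hx => (hpos x hx).ne']
    simp [Real.volume_Iic]
  · filter_upwards [ae_restrict_mem measurableSet_Iic] with x hx
    exact (hpos x hx).le
  · exact hint.integrableOn

lemma integral_Ioi_pos {h : ℝ → ℝ} (hint : Integrable h)
    {a : ℝ} (hpos : ∀ x ∈ Ioi a, 0 < h x) :
    0 < ∫ x in Ioi a, h x := by
  rw [setIntegral_pos_iff_support_of_nonneg_ae]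
  · rw [show Function.support h ∩ Ioi a = Ioi a from
      inter_eq_right.mpr fun x hx => (hpos x hx).ne']
    simp [Real.volume_Ioi]
  · filter_upwards [ae_restrict_mem measurableSet_Ioi] with x hx
    exact (hpos x hx).le
  · exact hint.integrableOn


lemma sign_transfer {u t v : ℝ} (h1 : 0 < u * t) (h2 : 0 < u * v) : 0 < t * v := by
  rcases lt_trichotomy u 0 with h | h | h
  · have ht : t < 0 := by nlinarith
    have hv : v < 0 := by nlinarith
    exact mul_pos_of_neg_of_neg ht hv
  · rw [h] at h1; simp at h1
  · have ht : 0 < t := by nlinarith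
    have hv : 0 < v := by nlinarith
    exact mul_pos ht hv


lemma gap_eps (Z : Finset ℝ) (t : ℝ) :
    ∃ ε : ℝ, 0 < ε ∧ ∀ z ∈ Z, z ≠ t → ε ≤ |z - t| := by
  classical
  rcases (Z.erase t).eq_empty_or_nonempty with h | h
  · exact ⟨1, one_pos, fun z hz hne =>
      absurd (Finset.mem_erase.mpr ⟨hne, hz⟩) (by simp [h])⟩
  · refine ⟨(Z.erase t).inf' h (fun s => |s - t|), ?_, ?_⟩
    · rw [Finset.lt_inf'_iff]
      intro z hz
      rw [abs_pos, sub_ne_zero]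
      exact (Finset.mem_erase.mp hz).1
    · intro z hz hne
      exact Finset.inf'_le _ (Finset.mem_erase.mpr ⟨hne, hz⟩)

theorem sign_match {F : ℝ → ℝ} (hF : Continuous F) (Z : Finset ℝ)
    (hZ : ∀ y, F y = 0 ↔ y ∈ Z) :
    ∃ e : ℝ → ℕ, (∀ t, e t ≤ 1) ∧
      ∀ x y : ℝ, F x ≠ 0 → F y ≠ 0 →
        0 < (F x * ∏ t ∈ Z, (x - t) ^ e t) * (F y * ∏ t ∈ Z, (y - t) ^ e t) := by
  classical
  choose ε hε0 hεsep using fun t => gap_eps Z t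
  set e : ℝ → ℕ := fun t => if F (t - ε t / 2) * F (t + ε t / 2) < 0 then 1 else 0 with he
  have he1 : ∀ t, e t ≤ 1 := by
    intro t; simp only [he]; split <;> omega
  set G : ℝ → ℝ := fun y => F y * ∏ t ∈ Z, (y - t) ^ e t with hG
  have hGcont : Continuous G := by
    rw [hG]
    exact hF.mul (continuous_finset_prod _ fun t _ =>
      ((continuous_id.sub continuous_const).pow _))
  have hpunct : ∀ t ∈ Z, ∀ z : ℝ, z ∈ Ioo (t - ε t) (t + ε t) → z ≠ t → F z ≠ 0 := by
    intro t htZ z hmem hne hF0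
    have hzZ : z ∈ Z := (hZ z).mp hF0
    have habs : |z - t| < ε t :=
      abs_sub_lt_iff.mpr ⟨by linarith [hmem.2], by linarith [hmem.1]⟩
    linarith [hεsep t z hzZ hne, habs]
  have hGne : ∀ z : ℝ, F z ≠ 0 → G z ≠ 0 := by
    intro z hFz
    simp only [hG]
    apply mul_ne_zero hFz
    apply Finset.prod_ne_zero_iff.mpr
    intro t htZ
    apply pow_ne_zero
    rw [sub_ne_zero]
    intro hzt
    rw [hzt] at hFz
    exact hFz ((hZ t).mpr htZ)
  -- local sign lemma
  have hlocal : ∀ t ∈ Z, ∀ x y : ℝ, x ∈ Ioo (t - ε t) t → y ∈ Ioo t (t + ε t) →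
      0 < G x * G y := by
    intro t htZ x y hx hy
    have hεt := hε0 t
    have humem : t - ε t / 2 ∈ Ioo (t - ε t) t := ⟨by linarith, by linarith⟩
    have hvmem : t + ε t / 2 ∈ Ioo t (t + ε t) := ⟨by linarith, by linarith⟩
    have hFu : F (t - ε t / 2) ≠ 0 :=
      hpunct t htZ _ ⟨by linarith, by linarith⟩ (by intro h; linarith [congrArg id h])
    have hFv : F (t + ε t / 2) ≠ 0 :=
      hpunct t htZ _ ⟨by linarith, by linarith⟩ (by intro h; linarith [congrArg id h])
    have hFx : F x ≠ 0 := hpunct t htZ x ⟨hx.1, by linarith [hx.2]⟩ hx.2.ne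
    have hFy : F y ≠ 0 := hpunct t htZ y ⟨by linarith [hy.1], hy.2⟩ hy.1.ne'
    have hA : 0 < F x * F (t - ε t / 2) := by
      apply pair_pos hF
      intro z hz
      have hzm : z ∈ Ioo (t - ε t) t := ordConnected_Ioo.uIcc_subset hx humem hz
      exact hpunct t htZ z ⟨hzm.1, by linarith [hzm.2]⟩ hzm.2.ne
    have hB : 0 < F y * F (t + ε t / 2) := by
      apply pair_pos hF
      intro z hz
      have hzm : z ∈ Ioo t (t + ε t) := ordConnected_Ioo.uIcc_subset hy hvmem hz
      exact hpunct t htZ z ⟨by linarith [hzm.1], hzm.2⟩ hzm.1.ne'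
    have hxyuv : 0 < (F x * F y) * (F (t - ε t / 2) * F (t + ε t / 2)) := by
      have hmul := mul_pos hA hB
      have heq : (F x * F (t - ε t / 2)) * (F y * F (t + ε t / 2)) =
          (F x * F y) * (F (t - ε t / 2) * F (t + ε t / 2)) := by ring
      linarith [hmul, heq.symm.le, heq.le]
    set P : ℝ := ∏ t' ∈ Z.erase t, ((x - t') * (y - t')) ^ e t' with hPdef
    have hP : 0 < P := by
      rw [hPdef]
      apply Finset.prod_pos
      intro t' ht'
      obtain ⟨hne', ht'Z⟩ := Finset.mem_erase.mp ht'
      apply pow_pos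
      have hsep := hεsep t t' ht'Z hne'
      rcases le_abs.mp hsep with hcase | hcase
      · -- ε t ≤ t' - t : t' is to the right
        apply mul_pos_of_neg_of_neg
        · have : x < t := hx.2; linarith
        · have : y < t + ε t := hy.2; linarith
      · -- ε t ≤ t - t'
        apply mul_pos
        · have : t - ε t < x := hx.1; linarith
        · have : t < y := hy.1; linarith
    have hGxy : G x * G y = (F x * F y) * (((x - t) * (y - t)) ^ e t * P) := by
      simp only [hG, hPdef]
      have h1 : (∏ t' ∈ Z, (x - t') ^ e t') * (∏ t' ∈ Z, (y - t') ^ e t') =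
          ∏ t' ∈ Z, ((x - t') * (y - t')) ^ e t' := by
        rw [← Finset.prod_mul_distrib]
        exact Finset.prod_congr rfl fun t' _ => (mul_pow _ _ _).symm
      have h2 : ∏ t' ∈ Z, ((x - t') * (y - t')) ^ e t' =
          ((x - t) * (y - t)) ^ e t * ∏ t' ∈ Z.erase t, ((x - t') * (y - t')) ^ e t' :=
        (Finset.mul_prod_erase Z _ htZ).symm
      calc F x * (∏ t' ∈ Z, (x - t') ^ e t') * (F y * ∏ t' ∈ Z, (y - t') ^ e t')
          = (F x * F y) * ((∏ t' ∈ Z, (x - t') ^ e t') * (∏ t' ∈ Z, (y - t') ^ e t')) := by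
            ring
      _ = (F x * F y) * (((x - t) * (y - t)) ^ e t *
            ∏ t' ∈ Z.erase t, ((x - t') * (y - t')) ^ e t') := by rw [h1, h2]
    by_cases hcase : F (t - ε t / 2) * F (t + ε t / 2) < 0
    · have het : e t = 1 := by simp only [he]; rw [if_pos hcase]
      have hfac : (x - t) * (y - t) < 0 :=
        mul_neg_of_neg_of_pos (by linarith [hx.2]) (by linarith [hy.1])
      have hFxy : F x * F y < 0 := by
        rcases mul_pos_iff.mp hxyuv with ⟨h1, h2⟩ | ⟨h1, h2⟩
        · exact absurd h2 (not_lt.mpr hcase.le)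
        · exact h1
      rw [hGxy, het, pow_one]
      exact mul_pos_of_neg_of_neg hFxy (mul_neg_of_neg_of_pos hfac hP)
    · have het : e t = 0 := by simp only [he]; rw [if_neg hcase]
      have huv : 0 < F (t - ε t / 2) * F (t + ε t / 2) :=
        lt_of_le_of_ne (not_lt.mp hcase) (Ne.symm (mul_ne_zero hFu hFv))
      have hFxy : 0 < F x * F y := by
        rcases mul_pos_iff.mp hxyuv with ⟨h1, h2⟩ | ⟨h1, h2⟩
        · exact h1
        · exact absurd h2 (not_lt.mpr huv.le)
      rw [hGxy, het, pow_zero, one_mul]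
      exact mul_pos hFxy hP
  -- the chain lemma
  have chain : ∀ N : ℕ, ∀ x y : ℝ, x < y → F x ≠ 0 → F y ≠ 0 →
      (Z.filter (fun z => z ∈ Ioo x y)).card ≤ N → 0 < G x * G y := by
    intro N
    induction N with
    | zero =>
      intro x y hxy hFx hFy hcard
      apply pair_pos hGcont
      intro z hz hG0
      have hFz : F z = 0 := by
        by_contra hFz
        exact hGne z hFz hG0
      have hzZ : z ∈ Z := (hZ z).mp hFz
      have hzIcc : z ∈ Icc x y := by rwa [uIcc_of_le hxy.le] at hz
      have hzx : z ≠ x := fun h => hFx (h ▸ hFz)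
      have hzy : z ≠ y := fun h => hFy (h ▸ hFz)
      have hzIoo : z ∈ Ioo x y := ⟨lt_of_le_of_ne hzIcc.1 (Ne.symm hzx), lt_of_le_of_ne hzIcc.2 hzy⟩
      have : 0 < (Z.filter (fun z => z ∈ Ioo x y)).card :=
        Finset.card_pos.mpr ⟨z, Finset.mem_filter.mpr ⟨hzZ, hzIoo⟩⟩
      omega
    | succ N ih =>
      intro x y hxy hFx hFy hcard
      by_cases hc : (Z.filter (fun z => z ∈ Ioo x y)).card ≤ N
      · exact ih x y hxy hFx hFy hc
      · have hpos : 0 < (Z.filter (fun z => z ∈ Ioo x y)).card := by omega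
        have hne : (Z.filter (fun z => z ∈ Ioo x y)).Nonempty := Finset.card_pos.mp hpos
        set t := (Z.filter (fun z => z ∈ Ioo x y)).max' hne with ht
        have htmem := (Z.filter (fun z => z ∈ Ioo x y)).max'_mem hne
        rw [Finset.mem_filter] at htmem
        obtain ⟨htZ, htIoo⟩ := htmem
        have hεt := hε0 t
        set x' := max (t - ε t / 2) ((x + t) / 2) with hx'def
        set y' := min (t + ε t / 2) ((y + t) / 2) with hy'def
        have hx'1 : t - ε t < x' := lt_of_lt_of_le (by linarith) (le_max_left _ _)
        have hx'2 : x' < t := max_lt (by linarith) (by linarith [htIoo.1])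
        have hxx' : x < x' := lt_of_lt_of_le (by linarith [htIoo.1]) (le_max_right _ _)
        have hy'1 : y' < t + ε t := lt_of_le_of_lt (min_le_left _ _) (by linarith)
        have hy'2 : t < y' := lt_min (by linarith) (by linarith [htIoo.2])
        have hy'y : y' < y := lt_of_le_of_lt (min_le_right _ _) (by linarith [htIoo.2])
        have hFx' : F x' ≠ 0 := hpunct t htZ x' ⟨hx'1, by linarith⟩ hx'2.ne
        have hFy' : F y' ≠ 0 := hpunct t htZ y' ⟨by linarith, hy'1⟩ hy'2.ne'
        have h1 : 0 < G x * G x' := by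
          apply ih x x' hxx' hFx hFx'
          have hsub : Z.filter (fun z => z ∈ Ioo x x') ⊆
              (Z.filter (fun z => z ∈ Ioo x y)).erase t := by
            intro z hz
            rw [Finset.mem_filter] at hz
            rw [Finset.mem_erase, Finset.mem_filter]
            refine ⟨by intro h; rw [h] at hz; linarith [hz.2.2], hz.1, hz.2.1, ?_⟩
            linarith [hz.2.2, htIoo.2]
          have := Finset.card_le_card hsub
          rw [Finset.card_erase_of_mem (by rw [Finset.mem_filter]; exact ⟨htZ, htIoo⟩)] at this
          omega
        have h2 : 0 < G x' * G y' := hlocal t htZ x' y' ⟨hx'1, hx'2⟩ ⟨hy'2, hy'1⟩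
        have h3 : 0 < G y' * G y := by
          apply ih y' y hy'y hFy' hFy
          have hempty : Z.filter (fun z => z ∈ Ioo y' y) = ∅ := by
            rw [Finset.filter_eq_empty_iff]
            intro z hzZ hmem
            have hzIoo : z ∈ Ioo x y := ⟨by linarith [hmem.1, htIoo.1], hmem.2⟩
            have hle : z ≤ t := Finset.le_max' _ z (Finset.mem_filter.mpr ⟨hzZ, hzIoo⟩)
            linarith [hmem.1]
          rw [hempty]
          simp
        have h1' : 0 < G x' * G x := by rw [mul_comm] at h1; exact h1
        have h4 : 0 < G x * G y' := sign_transfer h1' h2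
        have h4' : 0 < G y' * G x := by rw [mul_comm] at h4; exact h4
        exact sign_transfer h4' h3
  refine ⟨e, he1, ?_⟩
  intro x y hFx hFy
  rcases lt_trichotomy x y with h | h | h
  · exact chain Z.card x y h hFx hFy (Finset.card_filter_le _ _)
  · rw [← h]
    exact mul_self_pos.mpr (hGne x hFx)
  · have := chain Z.card y x h hFy hFx (Finset.card_filter_le _ _)
    rw [mul_comm] at this
    exact this


lemma integral_pos_of_pos_at {h : ℝ → ℝ} (hc : Continuous h) (hint : Integrable h)
    (hnn : ∀ y, 0 ≤ h y) {p : ℝ} (hp : 0 < h p) : 0 < ∫ y, h y := by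
  rw [integral_pos_iff_support_of_nonneg_ae (Eventually.of_forall hnn) hint]
  have hopen : IsOpen (h ⁻¹' ({0}ᶜ)) := (isOpen_compl_singleton).preimage hc
  have hsub : h ⁻¹' ({0}ᶜ) ⊆ Function.support h := fun x hx => hx
  exact lt_of_lt_of_le (hopen.measure_pos volume ⟨p, hp.ne'⟩) (measure_mono hsub)


variable {V : Polynomial ℝ} (hEven : Even V.natDegree) (hdeg : 2 ≤ V.natDegree)
  (hlc : 0 < V.leadingCoeff)
include hEven hdeg hlc


lemma integrable_kernel (f g : Polynomial ℝ) :
    Integrable (fun p : ℝ × ℝ => f.eval p.1 * g.eval p.2 * Real.sign (p.1 - p.2) *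
      Real.exp (-V.eval p.1 - V.eval p.2)) (volume : Measure (ℝ × ℝ)) := by
  have h1 : Integrable (fun x => (f.eval x ^ 2 + 1) * w V x) := by
    have := integrable_pw V hEven hdeg hlc (f * f + 1)
    refine this.congr (Eventually.of_forall fun x => ?_)
    simp [pow_two]
  have h2 : Integrable (fun x => (g.eval x ^ 2 + 1) * w V x) := by
    have := integrable_pw V hEven hdeg hlc (g * g + 1)
    refine this.congr (Eventually.of_forall fun x => ?_)
    simp [pow_two]
  rw [Measure.volume_eq_prod]
  have hdom : Integrable (fun p : ℝ × ℝ =>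
      ((f.eval p.1 ^ 2 + 1) * w V p.1) * ((g.eval p.2 ^ 2 + 1) * w V p.2))
      ((volume : Measure ℝ).prod volume) := h1.mul_prod h2
  refine hdom.mono' ?_ ?_
  · apply Measurable.aestronglyMeasurable
    have m1 : Measurable fun p : ℝ × ℝ => f.eval p.1 :=
      (f.continuous_aeval.comp continuous_fst).measurable
    have m2 : Measurable fun p : ℝ × ℝ => g.eval p.2 :=
      (g.continuous_aeval.comp continuous_snd).measurable
    have m3 : Measurable fun p : ℝ × ℝ => Real.sign (p.1 - p.2) :=
      measurable_sign.comp (measurable_fst.sub measurable_snd)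
    have m4 : Measurable fun p : ℝ × ℝ => Real.exp (-V.eval p.1 - V.eval p.2) :=
      (Real.continuous_exp.measurable).comp
        (((V.continuous_aeval.comp continuous_fst).neg.measurable).sub
          ((V.continuous_aeval.comp continuous_snd).measurable))
    exact ((m1.mul m2).mul m3).mul m4
  · filter_upwards with p
    rw [Real.norm_eq_abs, abs_mul, abs_mul, abs_mul]
    have e1 : |Real.exp (-V.eval p.1 - V.eval p.2)| = w V p.1 * w V p.2 := by
      rw [abs_of_pos (Real.exp_pos _), w, w, ← Real.exp_add]
      ring_nf
    rw [e1]
    have b1 := abs_le_sq_add_one (f.eval p.1)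
    have b2 := abs_le_sq_add_one (g.eval p.2)
    have b3 := abs_sign_le (p.1 - p.2)
    have w1 := (w_pos V p.1).le
    have w2 := (w_pos V p.2).le
    have n1 := abs_nonneg (f.eval p.1)
    have n2 := abs_nonneg (g.eval p.2)
    have n3 := abs_nonneg (Real.sign (p.1 - p.2))
    nlinarith [mul_le_mul b1 b2 n2 (by positivity : (0:ℝ) ≤ f.eval p.1 ^ 2 + 1),
      mul_nonneg w1 w2, mul_le_mul_of_nonneg_right
        (mul_le_mul b1 b2 n2 (by positivity : (0:ℝ) ≤ f.eval p.1 ^ 2 + 1))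
        (mul_nonneg w1 w2),
      mul_le_mul_of_nonneg_right b3 (mul_nonneg (mul_nonneg n1 n2) (mul_nonneg w1 w2))]


lemma skewInner_eq_Ff (f g : Polynomial ℝ) :
    skewInner V f g = ∫ y, Ff V f y * (g.eval y * w V y) := by
  rw [skewInner]
  have hi := integrable_kernel hEven hdeg hlc f g
  rw [Measure.volume_eq_prod] at hi
  rw [show ∫ p : ℝ × ℝ, f.eval p.1 * g.eval p.2 * Real.sign (p.1 - p.2) *
      Real.exp (-V.eval p.1 - V.eval p.2) =
      ∫ p : ℝ × ℝ, f.eval p.1 * g.eval p.2 * Real.sign (p.1 - p.2) *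
      Real.exp (-V.eval p.1 - V.eval p.2) ∂((volume : Measure ℝ).prod volume) from by
    rw [← Measure.volume_eq_prod]]
  rw [MeasureTheory.integral_prod_symm _ hi]
  refine integral_congr_ae (Eventually.of_forall fun y => ?_)
  have : ∀ x : ℝ, f.eval x * g.eval y * Real.sign (x - y) * Real.exp (-V.eval x - V.eval y)
      = (f.eval x * Real.sign (x - y) * w V x) * (g.eval y * w V y) := by
    intro x
    rw [w, w, show -V.eval x - V.eval y = -V.eval x + -V.eval y from by ring, Real.exp_add]
    ring
  simp_rw [this]
  rw [integral_mul_const, Ff]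


lemma Ff_eq (f : Polynomial ℝ) (y : ℝ) : Ff V f y = It V f - 2 * Av V f y := by
  have hint := integrable_pw V hEven hdeg hlc f
  have h1 : (fun x => f.eval x * Real.sign (x - y) * w V x) =ᵐ[volume]
      fun x => (Ioi y).indicator (fun x => f.eval x * w V x) x -
        (Iic y).indicator (fun x => f.eval x * w V x) x := by
    rw [Filter.EventuallyEq, ae_iff]
    refine measure_mono_null (fun x hx => ?_) (measure_singleton y)
    simp only [mem_setOf_eq] at hx
    by_contra hxy
    apply hx
    have hne : x ≠ y := hxy
    rcases hne.lt_or_gt with h | h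
    · rw [Real.sign_of_neg (by linarith : x - y < 0),
        indicator_of_notMem (by simp only [mem_Ioi, not_lt]; linarith),
        indicator_of_mem (by simp only [mem_Iic]; linarith)]
      ring
    · rw [Real.sign_of_pos (by linarith : 0 < x - y),
        indicator_of_mem (by simp only [mem_Ioi]; linarith),
        indicator_of_notMem (by simp only [mem_Iic, not_le]; linarith)]
      ring
  rw [Ff, integral_congr_ae h1,
    integral_sub (hint.indicator measurableSet_Ioi) (hint.indicator measurableSet_Iic),
    integral_indicator measurableSet_Ioi, integral_indicator measurableSet_Iic]
  have hsplit := integral_add_compl (measurableSet_Iic (a := y)) hint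
    (f := fun x => f.eval x * w V x)
  rw [compl_Iic] at hsplit
  unfold Av It
  linarith [hsplit]

lemma continuous_Av (f : Polynomial ℝ) : Continuous (Av V f) := by
  have hint := integrable_pw V hEven hdeg hlc f
  have heq : ∀ y, Av V f y = Av V f 0 + ∫ x in (0:ℝ)..y, f.eval x * w V x := by
    intro y
    rw [← intervalIntegral.integral_Iic_sub_Iic hint.integrableOn hint.integrableOn]
    unfold Av
    ring
  rw [show Av V f = fun y => Av V f 0 + ∫ x in (0:ℝ)..y, f.eval x * w V x from funext heq]
  exact continuous_const.add (hint.continuous_primitive 0)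

lemma continuous_Ff (f : Polynomial ℝ) : Continuous (Ff V f) := by
  rw [show Ff V f = fun y => It V f - 2 * Av V f y from
    funext fun y => Ff_eq hEven hdeg hlc f y]
  exact continuous_const.sub (continuous_const.mul (continuous_Av hEven hdeg hlc f))


lemma Av_diff (f : Polynomial ℝ) {a b : ℝ} (hab : a ≤ b) :
    Av V f b - Av V f a = ∫ x in Ioc a b, f.eval x * w V x := by
  have hint := integrable_pw V hEven hdeg hlc f
  have := setIntegral_union (f := fun x => f.eval x * w V x) (μ := volume)
    (Iic_disjoint_Ioc (le_refl a) : Disjoint (Iic a) (Ioc a b)) measurableSet_Ioc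
    hint.integrableOn hint.integrableOn
  rw [Iic_union_Ioc_eq_Iic hab] at this
  unfold Av
  linarith [this]

/-- Rolle-type step: between two zeros of `Ff` there is a root of `f`. -/
lemma root_between (f : Polynomial ℝ) {a b : ℝ} (hab : a < b)
    (ha : Ff V f a = 0) (hb : Ff V f b = 0) :
    ∃ r ∈ Ioo a b, f.eval r = 0 := by
  by_contra hno
  push_neg at hno
  have hint := integrable_pw V hEven hdeg hlc f
  have hA : Av V f b - Av V f a = 0 := by
    have h1 := Ff_eq hEven hdeg hlc f a
    have h2 := Ff_eq hEven hdeg hlc f b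
    rw [ha] at h1; rw [hb] at h2
    linarith
  rw [Av_diff hEven hdeg hlc f hab.le] at hA
  set h : ℝ → ℝ := fun x => f.eval x * w V x with hh
  have hc : Continuous h := (f.continuous_aeval).mul (continuous_w V)
  set c : ℝ := (a + b) / 2 with hcdef
  have hcmem : c ∈ Ioo a b := ⟨by simp [hcdef]; linarith, by simp [hcdef]; linarith⟩
  have hpos : ∀ x ∈ Ioo a b, 0 < h c * h x := by
    intro x hx
    refine pair_pos hc fun z hz => ?_
    have hzmem : z ∈ Ioo a b := ordConnected_Ioo.uIcc_subset hcmem hx hz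
    show f.eval z * w V z ≠ 0
    exact mul_ne_zero (hno z hzmem) (w_pos V z).ne'
  have := integral_Ioc_pos (h := fun x => h c * h x) (continuous_const.mul hc) (hint.const_mul (h c)) hab hpos
  rw [MeasureTheory.integral_const_mul, hA, mul_zero] at this
  exact lt_irrefl 0 this


lemma zeros_count {f : Polynomial ℝ} (hf : f ≠ 0) (s : Finset ℝ)
    (hs : ∀ t ∈ s, Ff V f t = 0) :
    s.card ≤ f.roots.toFinset.card + 1 ∧
    (s.card = f.roots.toFinset.card + 1 →
      ∀ r ∈ f.roots.toFinset, ∃ hne : s.Nonempty, s.min' hne < r ∧ r < s.max' hne) := by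
  classical
  set m := f.roots.toFinset.card with hm
  set k := s.card with hk
  rcases Nat.eq_zero_or_pos k with h0 | hpos
  · exact ⟨by omega, fun h => by omega⟩
  have hne : s.Nonempty := Finset.card_pos.mp hpos
  set e := s.orderIsoOfFin hk.symm with he
  set t : Fin k → ℝ := fun j => (e j : ℝ) with htdef
  have ht : StrictMono t := fun a b hab => Subtype.coe_lt_coe.mpr (e.strictMono hab)
  have hts : ∀ j, t j ∈ s := fun j => (e j).2
  have hgap : ∀ i : Fin (k - 1),
      ∃ r, r ∈ Ioo (t ⟨i.1, by omega⟩) (t ⟨i.1 + 1, by omega⟩) ∧ f.eval r = 0 := by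
    intro i
    have hlt : (⟨i.1, by omega⟩ : Fin k) < ⟨i.1 + 1, by omega⟩ := by
      simp [Fin.mk_lt_mk]
    obtain ⟨r, hr1, hr2⟩ := root_between hEven hdeg hlc f (ht hlt)
      (hs _ (hts _)) (hs _ (hts _))
    exact ⟨r, hr1, hr2⟩
  choose ρ hρIoo hρ0 using hgap
  have hρmem : ∀ i, ρ i ∈ f.roots.toFinset := by
    intro i
    rw [Multiset.mem_toFinset, Polynomial.mem_roots']
    exact ⟨hf, hρ0 i⟩
  have hρmono : ∀ i j : Fin (k - 1), i < j → ρ i < ρ j := by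
    intro i j hij
    have h1 : ρ i < t ⟨i.1 + 1, by omega⟩ := (hρIoo i).2
    have h2 : t ⟨i.1 + 1, by omega⟩ ≤ t ⟨j.1, by omega⟩ := by
      apply ht.monotone
      simp only [Fin.mk_le_mk]
      exact Nat.succ_le_of_lt hij
    have h3 : t ⟨j.1, by omega⟩ < ρ j := (hρIoo j).1
    linarith
  have hinj : Function.Injective ρ := by
    intro i j hij
    by_contra hne'
    rcases lt_or_gt_of_ne hne' with h | h
    · exact absurd hij (hρmono i j h).ne
    · exact absurd hij.symm (hρmono j i h).ne
  have hcard : k - 1 ≤ m := by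
    have := Finset.card_le_card_of_injOn (s := (Finset.univ : Finset (Fin (k - 1))))
      ρ (fun i _ => hρmem i) hinj.injOn
    simpa using this
  refine ⟨by omega, fun hkm => ?_⟩
  -- equality case : image of ρ is all of the roots
  have hkm1 : k - 1 = m := by omega
  have himage : Finset.image ρ Finset.univ = f.roots.toFinset := by
    apply Finset.eq_of_subset_of_card_le
    · intro r hr
      obtain ⟨i, _, rfl⟩ := Finset.mem_image.mp hr
      exact hρmem i
    · rw [Finset.card_image_of_injective _ hinj]
      simp [hkm1]
      exact hm.symm.le
  intro r hr
  rw [← himage] at hr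
  obtain ⟨i, _, rfl⟩ := Finset.mem_image.mp hr
  refine ⟨hne, ?_, ?_⟩
  · calc s.min' hne ≤ t ⟨i.1, by omega⟩ := Finset.min'_le _ _ (hts _)
    _ < ρ i := (hρIoo i).1
  · calc ρ i < t ⟨i.1 + 1, by omega⟩ := (hρIoo i).2
    _ ≤ s.max' hne := Finset.le_max' _ _ (hts _)

lemma Zset_finite {f : Polynomial ℝ} (hf : f ≠ 0) : {y | Ff V f y = 0}.Finite := by
  by_contra hinf
  rw [← Set.not_infinite, not_not] at hinf
  obtain ⟨s, hsub, hcard⟩ := hinf.exists_subset_card_eq (f.roots.toFinset.card + 2)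
  have := (zeros_count hEven hdeg hlc hf s (fun t ht => hsub ht)).1
  omega

/-- Case B : `Ff` vanishes at points `a ≤ b` with all roots of `f` strictly inside `(a,b)`,
and `f` of odd degree — contradiction. -/
lemma caseB {f : Polynomial ℝ} (hf : f ≠ 0) (hodd : Odd f.natDegree)
    {a b : ℝ} (ha : Ff V f a = 0) (hb : Ff V f b = 0)
    (hroots : ∀ r : ℝ, f.eval r = 0 → a < r ∧ r < b) : False := by
  have hint := integrable_pw V hEven hdeg hlc f
  set h : ℝ → ℝ := fun x => f.eval x * w V x with hh
  have hfa : f.eval a ≠ 0 := fun h0 => absurd (hroots a h0).1 (lt_irrefl a)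
  have hfb : f.eval b ≠ 0 := fun h0 => absurd (hroots b h0).2 (lt_irrefl b)
  have hAa : Av V f a = It V f / 2 := by
    have := Ff_eq hEven hdeg hlc f a; rw [ha] at this; linarith
  have hAb : Av V f b = It V f / 2 := by
    have := Ff_eq hEven hdeg hlc f b; rw [hb] at this; linarith
  have hIoi : ∫ x in Ioi b, h x = It V f / 2 := by
    have hsplit := integral_add_compl (measurableSet_Iic (a := b)) hint (f := h)
    rw [compl_Iic] at hsplit
    have : Av V f b = ∫ x in Iic b, h x := rfl
    unfold It at hAb ⊢
    linarith [hsplit, hAb]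
  -- sign claims
  have claim1 : 0 < h a * (It V f / 2) := by
    rw [← hAa]
    have : Av V f a = ∫ x in Iic a, h x := rfl
    rw [this, ← MeasureTheory.integral_const_mul]
    apply integral_Iic_pos (hint.const_mul (h a))
    intro x hx
    apply pair_pos ((f.continuous_aeval).mul (continuous_w V))
    intro z hz
    have hza : z ≤ a := by
      have : uIcc a x ⊆ Iic a := ordConnected_Iic.uIcc_subset (mem_Iic.mpr le_rfl) hx
      exact this hz
    have : f.eval z ≠ 0 := fun h0 => absurd (hroots z h0).1 (by linarith)
    exact mul_ne_zero this (w_pos V z).ne'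
  have claim2 : 0 < h b * (It V f / 2) := by
    rw [← hIoi, ← MeasureTheory.integral_const_mul]
    apply integral_Ioi_pos (hint.const_mul (h b))
    intro x hx
    apply pair_pos ((f.continuous_aeval).mul (continuous_w V))
    intro z hz
    have hzb : b ≤ z := by
      have : uIcc b x ⊆ Ici b := ordConnected_Ici.uIcc_subset (mem_Ici.mpr le_rfl) (mem_Ici.mpr (le_of_lt hx))
      exact this hz
    have : f.eval z ≠ 0 := fun h0 => absurd (hroots z h0).2 (by linarith)
    exact mul_ne_zero this (w_pos V z).ne'
  have hab2 : 0 < h a * h b := by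
    have c1 : 0 < (It V f / 2) * h a := by linarith [claim1]
    have c2 : 0 < (It V f / 2) * h b := by linarith [claim2]
    exact sign_transfer c1 c2
  -- signs at infinity
  have hposb : 0 < f.eval b * f.leadingCoeff := by
    obtain ⟨X, hX1, hX2⟩ := ((eventually_pos_mul_leadingCoeff hf).and
      (eventually_gt_atTop b)).exists
    have hpair : 0 < f.eval b * f.eval X := by
      apply pair_pos f.continuous_aeval
      intro z hz
      have hzb : b ≤ z := by
        have : uIcc b X ⊆ Ici b := ordConnected_Ici.uIcc_subset (mem_Ici.mpr le_rfl) (mem_Ici.mpr (le_of_lt hX2))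
        exact this hz
      exact fun h0 => absurd (hroots z h0).2 (by linarith)
    have c1 : 0 < f.eval X * f.leadingCoeff := hX1
    have c2 : 0 < f.eval X * f.eval b := by linarith [hpair]
    exact sign_transfer c2 c1
  have hposa : 0 < f.eval a * (f.leadingCoeff * (-1) ^ f.natDegree) := by
    set q := f.comp (-Polynomial.X) with hq
    have hql : q.leadingCoeff = f.leadingCoeff * (-1) ^ f.natDegree := by
      rw [hq, Polynomial.leadingCoeff_comp (by simp)]
      simp
    have hq0 : q ≠ 0 := by
      intro h0
      apply hf
      have := Polynomial.leadingCoeff_eq_zero.mpr h0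
      rw [hql] at this
      have hlc0 : f.leadingCoeff = 0 := by
        rcases mul_eq_zero.mp this with h1 | h1
        · exact h1
        · exact absurd h1 (by positivity)
      exact Polynomial.leadingCoeff_eq_zero.mp hlc0
    obtain ⟨X, hX1, hX2⟩ := ((eventually_pos_mul_leadingCoeff hq0).and
      (eventually_gt_atTop (-a))).exists
    have hXa : -X < a := by linarith
    have hevq : q.eval X = f.eval (-X) := by
      rw [hq, Polynomial.eval_comp]; simp
    have hpair : 0 < f.eval (-X) * f.eval a := by
      apply pair_pos f.continuous_aeval
      intro z hz
      have hza : z ≤ a := by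
        have : uIcc (-X) a ⊆ Iic a := ordConnected_Iic.uIcc_subset (mem_Iic.mpr (le_of_lt hXa)) (mem_Iic.mpr le_rfl)
        exact this hz
      exact fun h0 => absurd (hroots z h0).1 (by linarith)
    rw [hevq, hql] at hX1
    have c1 : 0 < f.eval (-X) * (f.leadingCoeff * (-1) ^ f.natDegree) := hX1
    have c2 : 0 < f.eval (-X) * f.eval a := hpair
    have := sign_transfer c2 c1
    linarith [this]
  have hneg : (-1 : ℝ) ^ f.natDegree = -1 := Odd.neg_one_pow hodd
  rw [hneg] at hposa
  -- f a * f b < 0 from signs at infinity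
  have hfneg : 0 < (-f.eval a) * f.eval b := by
    have c1 : 0 < f.leadingCoeff * (-f.eval a) := by nlinarith [hposa]
    have c2 : 0 < f.leadingCoeff * f.eval b := by linarith [hposb]
    exact sign_transfer c1 c2
  -- but f a * f b > 0 from the integrals
  have hw : 0 < w V a * w V b := mul_pos (w_pos V a) (w_pos V b)
  have h5 : 0 < (f.eval a * f.eval b) * (w V a * w V b) := by
    have : h a * h b = (f.eval a * f.eval b) * (w V a * w V b) := by rw [hh]; ring
    linarith [hab2, this]
  rcases mul_pos_iff.mp h5 with ⟨h6, _⟩ | ⟨_, h7⟩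
  · nlinarith [hfneg, h6]
  · linarith [hw, h7]


lemma caseA {f : Polynomial ℝ} {K : ℕ}
    (horth : ∀ q : Polynomial ℝ, q.natDegree ≤ K →
      (∫ y, Ff V f y * (q.eval y * w V y)) = 0)
    (Z : Finset ℝ) (hZ : ∀ y, Ff V f y = 0 ↔ y ∈ Z) (hcard : Z.card ≤ K) : False := by
  classical
  obtain ⟨e, he1, hsign⟩ := sign_match (continuous_Ff hEven hdeg hlc f) Z hZ
  obtain ⟨p₀, hp₀mem⟩ := (Z.finite_toSet.infinite_compl).nonempty
  have hp₀ : Ff V f p₀ ≠ 0 := by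
    intro h0
    exact hp₀mem (by exact_mod_cast (hZ p₀).mp h0)
  set g₀ : Polynomial ℝ := ∏ t ∈ Z, (Polynomial.X - Polynomial.C t) ^ e t with hg₀
  have hg₀eval : ∀ y : ℝ, g₀.eval y = ∏ t ∈ Z, (y - t) ^ e t := by
    intro y
    rw [hg₀, Polynomial.eval_prod]
    exact Finset.prod_congr rfl fun t _ => by simp
  have hg₀deg : g₀.natDegree ≤ Z.card := by
    rw [hg₀, Polynomial.natDegree_prod _ _ (fun t _ => pow_ne_zero _ (Polynomial.X_sub_C_ne_zero t))]
    calc ∑ t ∈ Z, ((Polynomial.X - Polynomial.C t) ^ e t).natDegree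
        = ∑ t ∈ Z, e t := Finset.sum_congr rfl fun t _ => by
          rw [Polynomial.natDegree_pow, Polynomial.natDegree_X_sub_C, mul_one]
    _ ≤ ∑ _t ∈ Z, 1 := Finset.sum_le_sum fun t _ => he1 t
    _ = Z.card := by simp
  set Gp : ℝ := Ff V f p₀ * ∏ t ∈ Z, (p₀ - t) ^ e t with hGp
  set g : Polynomial ℝ := Polynomial.C Gp * g₀ with hg
  have hgdeg : g.natDegree ≤ K := by
    calc g.natDegree ≤ g₀.natDegree := Polynomial.natDegree_C_mul_le _ _
    _ ≤ Z.card := hg₀deg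
    _ ≤ K := hcard
  set h : ℝ → ℝ := fun y => Ff V f y * (g.eval y * w V y) with hh
  have hkey : ∀ y, h y = (Gp * (Ff V f y * ∏ t ∈ Z, (y - t) ^ e t)) * w V y := by
    intro y
    rw [hh]
    simp only [hg, Polynomial.eval_mul, Polynomial.eval_C, hg₀eval y]
    ring
  have hnn : ∀ y, 0 ≤ h y := by
    intro y
    rw [hkey y]
    by_cases hFy : Ff V f y = 0
    · rw [hFy]
      simp
    · exact le_of_lt (mul_pos (hsign p₀ y hp₀ hFy) (w_pos V y))
  have hppos : 0 < h p₀ := by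
    rw [hkey p₀]
    exact mul_pos (hsign p₀ p₀ hp₀ hp₀) (w_pos V p₀)
  have hcont : Continuous h := by
    rw [hh]
    exact (continuous_Ff hEven hdeg hlc f).mul
      ((g.continuous_aeval).mul (continuous_w V))
  -- integrability of h
  set Cf : ℝ := ∫ x, |f.eval x * w V x| with hCf
  have hCf0 : 0 ≤ Cf := integral_nonneg fun x => abs_nonneg _
  have hFbd : ∀ y, |Ff V f y| ≤ Cf := by
    intro y
    have h1 : |Ff V f y| ≤ ∫ x, |f.eval x| * |Real.sign (x - y)| * |w V x| := by
      rw [Ff]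
      simpa [Real.norm_eq_abs, abs_mul] using
        norm_integral_le_integral_norm (μ := volume)
          (fun x => f.eval x * Real.sign (x - y) * w V x)
    refine le_trans h1 (integral_mono_of_nonneg
      (Eventually.of_forall fun x => by positivity)
      ((integrable_pw V hEven hdeg hlc f).abs) (Eventually.of_forall fun x => ?_))
    have h2 : |f.eval x| * |Real.sign (x - y)| * |w V x| ≤ |f.eval x| * 1 * |w V x| := by
      apply mul_le_mul_of_nonneg_right _ (abs_nonneg _)
      exact mul_le_mul_of_nonneg_left (abs_sign_le _) (abs_nonneg _)
    calc |f.eval x| * |Real.sign (x - y)| * |w V x| ≤ |f.eval x| * 1 * |w V x| := h2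
    _ = |f.eval x| * |w V x| := by ring
    _ = |f.eval x * w V x| := (abs_mul _ _).symm
  have hint : Integrable h := by
    have hB := integrable_pw V hEven hdeg hlc (Polynomial.C Cf * (g * g + 1))
    refine hB.mono' hcont.aestronglyMeasurable (Eventually.of_forall fun y => ?_)
    rw [hh]
    simp only [Polynomial.eval_mul, Polynomial.eval_add, Polynomial.eval_one, Polynomial.eval_C]
    rw [Real.norm_eq_abs, abs_mul, abs_mul]
    have hwabs : |w V y| = w V y := abs_of_pos (w_pos V y)
    rw [hwabs]
    have hgb : |g.eval y| ≤ g.eval y ^ 2 + 1 := abs_le_sq_add_one _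
    have : |Ff V f y| * (|g.eval y| * w V y) ≤ Cf * ((g.eval y ^ 2 + 1) * w V y) := by
      apply mul_le_mul (hFbd y)
      · exact mul_le_mul_of_nonneg_right hgb (w_pos V y).le
      · exact mul_nonneg (abs_nonneg _) (w_pos V y).le
      · exact hCf0
    calc |Ff V f y| * (|g.eval y| * w V y) ≤ Cf * ((g.eval y ^ 2 + 1) * w V y) := this
    _ = Cf * (g.eval y * g.eval y + 1) * w V y := by ring
  have h0 : ∫ y, h y = 0 := horth g hgdeg
  have := integral_pos_of_pos_at hcont hint hnn hppos
  rw [h0] at this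
  exact lt_irrefl 0 this


lemma skewInner_sum_left {ι : Type*} (s : Finset ι) (c : ι → ℝ) (p : ι → Polynomial ℝ)
    (q : Polynomial ℝ) :
    skewInner V (∑ i ∈ s, Polynomial.C (c i) * p i) q =
      ∑ i ∈ s, c i * skewInner V (p i) q := by
  unfold skewInner
  have hpt : ∀ pt : ℝ × ℝ,
      (∑ i ∈ s, Polynomial.C (c i) * p i).eval pt.1 * q.eval pt.2 * Real.sign (pt.1 - pt.2) *
        Real.exp (-V.eval pt.1 - V.eval pt.2) =
      ∑ i ∈ s, c i * ((p i).eval pt.1 * q.eval pt.2 * Real.sign (pt.1 - pt.2) *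
        Real.exp (-V.eval pt.1 - V.eval pt.2)) := by
    intro pt
    rw [Polynomial.eval_finset_sum]
    rw [Finset.sum_mul, Finset.sum_mul, Finset.sum_mul]
    exact Finset.sum_congr rfl fun i _ => by
      rw [Polynomial.eval_mul, Polynomial.eval_C]; ring
  simp_rw [hpt]
  rw [integral_finset_sum s (fun i _ =>
    (integrable_kernel hEven hdeg hlc (p i) q).const_mul (c i))]
  exact Finset.sum_congr rfl fun i _ => integral_const_mul _ _

lemma skewInner_sum_right {ι : Type*} (s : Finset ι) (c : ι → ℝ) (p : ι → Polynomial ℝ)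
    (f : Polynomial ℝ) :
    skewInner V f (∑ i ∈ s, Polynomial.C (c i) * p i) =
      ∑ i ∈ s, c i * skewInner V f (p i) := by
  unfold skewInner
  have hpt : ∀ pt : ℝ × ℝ,
      f.eval pt.1 * (∑ i ∈ s, Polynomial.C (c i) * p i).eval pt.2 * Real.sign (pt.1 - pt.2) *
        Real.exp (-V.eval pt.1 - V.eval pt.2) =
      ∑ i ∈ s, c i * (f.eval pt.1 * (p i).eval pt.2 * Real.sign (pt.1 - pt.2) *
        Real.exp (-V.eval pt.1 - V.eval pt.2)) := by
    intro pt
    rw [Polynomial.eval_finset_sum, Finset.mul_sum, Finset.sum_mul, Finset.sum_mul]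
    exact Finset.sum_congr rfl fun i _ => by
      rw [Polynomial.eval_mul, Polynomial.eval_C]; ring
  simp_rw [hpt]
  rw [integral_finset_sum s (fun i _ =>
    (integrable_kernel hEven hdeg hlc f (p i)).const_mul (c i))]
  exact Finset.sum_congr rfl fun i _ => integral_const_mul _ _


end SkewAux

open SkewAux


/-- The `2n × 2n` skew-symmetric moment matrix `M_{ij} = ⟨x^i, y^j⟩₁` is invertible. -/
theorem moment_matrix_invertible
    (V : Polynomial ℝ) (hEven : Even V.natDegree) (hdeg : 2 ≤ V.natDegree)
    (hlc : 0 < V.leadingCoeff) (n : ℕ) (hn : 1 ≤ n) :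
    (Matrix.of fun i j : Fin (2 * n) =>
      skewInner V (X ^ (i : ℕ)) (X ^ (j : ℕ))).det ≠ 0 := by
  classical
  intro hdet
  obtain ⟨c, hc0, hcM⟩ := Matrix.exists_vecMul_eq_zero_iff.mpr hdet
  set f : Polynomial ℝ := ∑ i : Fin (2 * n), Polynomial.C (c i) * Polynomial.X ^ (i : ℕ)
    with hfdef
  -- coefficients of f
  have hcoeff1 : ∀ i : Fin (2 * n), f.coeff (i : ℕ) = c i := by
    intro i
    rw [hfdef, Polynomial.finset_sum_coeff]
    rw [Finset.sum_eq_single i]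
    · rw [Polynomial.coeff_C_mul, Polynomial.coeff_X_pow, if_pos rfl, mul_one]
    · intro j _ hji
      rw [Polynomial.coeff_C_mul, Polynomial.coeff_X_pow,
        if_neg (fun h => hji (Fin.ext (by exact_mod_cast h.symm))), mul_zero]
    · intro h
      exact absurd (Finset.mem_univ i) h
  have hcoeff2 : ∀ d : ℕ, 2 * n ≤ d → f.coeff d = 0 := by
    intro d hd
    rw [hfdef, Polynomial.finset_sum_coeff]
    apply Finset.sum_eq_zero
    intro j _
    rw [Polynomial.coeff_C_mul, Polynomial.coeff_X_pow,
      if_neg (fun h => by have := j.2; omega), mul_zero]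
  have hf0 : f ≠ 0 := by
    intro h
    apply hc0
    funext i
    have := hcoeff1 i
    rw [h, Polynomial.coeff_zero] at this
    exact this.symm
  have hfdeg : f.natDegree ≤ 2 * n - 1 := by
    rw [Polynomial.natDegree_le_iff_coeff_eq_zero]
    intro N hN
    exact hcoeff2 N (by omega)
  -- orthogonality against monomials
  have hM : ∀ j : Fin (2 * n),
      ∑ i : Fin (2 * n), c i * skewInner V (X ^ (i : ℕ)) (X ^ (j : ℕ)) = 0 := by
    intro j
    have := congrFun hcM j
    simpa [Matrix.vecMul, dotProduct] using this
  have horthX : ∀ j : Fin (2 * n), skewInner V f (X ^ (j : ℕ)) = 0 := by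
    intro j
    rw [hfdef, skewInner_sum_left hEven hdeg hlc]
    exact hM j
  -- orthogonality against all polynomials of degree < 2n
  have horth : ∀ q : Polynomial ℝ, q.natDegree ≤ 2 * n - 1 →
      (∫ y, Ff V f y * (q.eval y * w V y)) = 0 := by
    intro q hq
    rw [← skewInner_eq_Ff hEven hdeg hlc]
    have hqe : q = ∑ j ∈ Finset.range (2 * n), Polynomial.C (q.coeff j) * Polynomial.X ^ j := by
      conv_lhs => rw [Polynomial.as_sum_range' q (2 * n) (by omega)]
      exact Finset.sum_congr rfl fun j _ => (Polynomial.C_mul_X_pow_eq_monomial).symm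
    conv_lhs => rw [hqe]
    rw [skewInner_sum_right hEven hdeg hlc]
    apply Finset.sum_eq_zero
    intro j hj
    have hjlt : j < 2 * n := Finset.mem_range.mp hj
    have := horthX ⟨j, hjlt⟩
    simp only [Fin.val_mk] at this
    rw [this, mul_zero]
  -- the zero set of Ff
  have hfin := Zset_finite hEven hdeg hlc hf0
  set Z : Finset ℝ := hfin.toFinset with hZdef
  have hZiff : ∀ y, Ff V f y = 0 ↔ y ∈ Z := by
    intro y
    rw [hZdef, Set.Finite.mem_toFinset]
    rfl
  have hzc := zeros_count hEven hdeg hlc hf0 Z (fun t ht => (hZiff t).mpr ht)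
  have hm : f.roots.toFinset.card ≤ 2 * n - 1 := by
    calc f.roots.toFinset.card ≤ Multiset.card f.roots := Multiset.toFinset_card_le _
    _ ≤ f.natDegree := f.card_roots'
    _ ≤ 2 * n - 1 := hfdeg
  by_cases hk : Z.card ≤ 2 * n - 1
  · exact caseA hEven hdeg hlc horth Z hZiff hk
  · -- Z.card = 2n, roots.toFinset.card = 2n - 1, natDegree f = 2n - 1
    have hk1 : Z.card = 2 * n := by omega
    have hm1 : f.roots.toFinset.card = 2 * n - 1 := by omega
    have hndeg : f.natDegree = 2 * n - 1 := by
      have h1 : f.roots.toFinset.card ≤ f.natDegree :=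
        le_trans (Multiset.toFinset_card_le _) f.card_roots'
      omega
    have hodd : Odd f.natDegree := by
      rw [hndeg]
      exact ⟨n - 1, by omega⟩
    have heq : Z.card = f.roots.toFinset.card + 1 := by omega
    have hroots := hzc.2 heq
    have hne : Z.Nonempty := Finset.card_pos.mp (by omega)
    refine caseB hEven hdeg hlc hf0 hodd
      (a := Z.min' hne) (b := Z.max' hne) ?_ ?_ ?_
    · exact (hZiff _).mpr (Z.min'_mem hne)
    · exact (hZiff _).mpr (Z.max'_mem hne)
    · intro r hr
      have hrmem : r ∈ f.roots.toFinset := by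
        rw [Multiset.mem_toFinset, Polynomial.mem_roots']
        exact ⟨hf0, hr⟩
      obtain ⟨hne', h1, h2⟩ := hroots r hrmem
      exact ⟨h1, h2⟩
end

section
/- For every polynomial f and every j ≥ 0, ⟨f, π_{j+d−1}⟩₁ = 2 ⟨f, x^j⟩₂, where the skew-inner product is applied with π_{j+d−1} in the second slot. -/
open MeasureTheory Polynomial Filter Set

/-- The inner product `⟨f,g⟩₂ = ∫ f(x) g(x) e^{−2V(x)} dx`. -/
noncomputable def innerTwo (V f g : Polynomial ℝ) : ℝ :=
  ∫ x : ℝ, f.eval x * g.eval x * Real.exp (-2 * V.eval x)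

/-- The polynomial `π_{j+d−1}(y) = j y^{j−1} − y^j V′(y)`. -/
noncomputable def piPoly (V : Polynomial ℝ) (j : ℕ) : Polynomial ℝ :=
  C (j : ℝ) * X ^ (j - 1) - X ^ j * derivative V

section Aux

lemma measurable_realSign : Measurable Real.sign := by
  unfold Real.sign
  exact Measurable.ite (measurableSet_lt measurable_id measurable_const) measurable_const
    (Measurable.ite (measurableSet_lt measurable_const measurable_id) measurable_const
      measurable_const)

lemma abs_realSign_le (r : ℝ) : |Real.sign r| ≤ 1 := by
  rcases lt_trichotomy r 0 with h | h | h
  · simp [Real.sign_of_neg h]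
  · simp [h, Real.sign_zero]
  · simp [Real.sign_of_pos h]

variable {W : Polynomial ℝ}

lemma deg_pos (h2 : 2 ≤ W.natDegree) (hlc : 0 < W.leadingCoeff) : 0 < W.degree := by
  have hW : W ≠ 0 := leadingCoeff_ne_zero.mp hlc.ne'
  rw [degree_eq_natDegree hW]
  exact_mod_cast lt_of_lt_of_le (by norm_num) h2

lemma one_lt_deg (h2 : 2 ≤ W.natDegree) (hlc : 0 < W.leadingCoeff) : 1 < W.degree := by
  have hW : W ≠ 0 := leadingCoeff_ne_zero.mp hlc.ne'
  rw [degree_eq_natDegree hW]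
  exact_mod_cast lt_of_lt_of_le (by norm_num) h2

/-- `W(y) - c y → ∞` as `y → ∞`. -/
lemma sub_linear_tendsto (h2 : 2 ≤ W.natDegree) (hlc : 0 < W.leadingCoeff) (c : ℝ) :
    Tendsto (fun y => W.eval y - c * y) atTop atTop := by
  have hdlt : (C c * X).degree < W.degree :=
    lt_of_le_of_lt (degree_C_mul_X_le c) (one_lt_deg h2 hlc)
  have hdeg : 0 < (W - C c * X).degree := by
    rw [degree_sub_eq_left_of_degree_lt hdlt]; exact deg_pos h2 hlc
  have hl : 0 ≤ (W - C c * X).leadingCoeff := by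
    rw [leadingCoeff_sub_of_degree_lt hdlt]; exact hlc.le
  have := Polynomial.tendsto_atTop_of_leadingCoeff_nonneg _ hdeg hl
  refine this.congr fun y => ?_
  simp

/-- Eventual exponential bound at `+∞`. -/
lemma eventually_bound (h2 : 2 ≤ W.natDegree) (hlc : 0 < W.leadingCoeff) (P : Polynomial ℝ) :
    ∀ᶠ y in atTop, ‖P.eval y * Real.exp (-W.eval y)‖ ≤ Real.exp (-y) := by
  have h1 : ∀ᶠ y in atTop, (2:ℝ) * y ≤ W.eval y := by
    filter_upwards [(sub_linear_tendsto h2 hlc 2).eventually_ge_atTop 0] with y hy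
    linarith
  have h2' : ∀ᶠ y in atTop, ‖P.eval y‖ ≤ Real.exp y := by
    have h0 : Tendsto (fun y => |P.eval y / Real.exp y|) atTop (nhds 0) := by
      simpa using (P.tendsto_div_exp_atTop).abs
    have := h0.eventually (eventually_le_nhds (by norm_num : (0:ℝ) < 1))
    filter_upwards [this] with y hy
    have hexp : (0:ℝ) < Real.exp y := Real.exp_pos y
    rw [abs_div, abs_of_pos hexp, div_le_iff₀ hexp, one_mul] at hy
    simpa using hy
  filter_upwards [h1, h2'] with y hy1 hy2
  rw [norm_mul, Real.norm_eq_abs (Real.exp _), abs_of_pos (Real.exp_pos _)]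
  calc ‖P.eval y‖ * Real.exp (-W.eval y) ≤ Real.exp y * Real.exp (-(2*y)) := by
        apply mul_le_mul hy2 (Real.exp_le_exp.mpr (by linarith)) (Real.exp_pos _).le
          (Real.exp_pos _).le
    _ = Real.exp (-y) := by rw [← Real.exp_add]; ring_nf

lemma tendsto_top (h2 : 2 ≤ W.natDegree) (hlc : 0 < W.leadingCoeff) (P : Polynomial ℝ) :
    Tendsto (fun y => P.eval y * Real.exp (-W.eval y)) atTop (nhds 0) := by
  apply squeeze_zero_norm' (eventually_bound h2 hlc P)
  simpa using Real.tendsto_exp_comp_nhds_zero.mpr tendsto_neg_atTop_atBot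

/-- Properties of the reflected polynomial. -/
lemma refl_props (hEven : Even W.natDegree) (h2 : 2 ≤ W.natDegree) (hlc : 0 < W.leadingCoeff) :
    2 ≤ (W.comp (-X)).natDegree ∧ 0 < (W.comp (-X)).leadingCoeff := by
  have hx : ((-X : Polynomial ℝ)).natDegree = 1 := by simp
  constructor
  · rw [natDegree_comp, hx, mul_one]; exact h2
  · rw [leadingCoeff_comp (by rw [hx]; norm_num)]
    have : ((-X : Polynomial ℝ)).leadingCoeff = -1 := by simp
    rw [this, hEven.neg_one_pow, mul_one]; exact hlc

lemma tendsto_bot (hEven : Even W.natDegree) (h2 : 2 ≤ W.natDegree) (hlc : 0 < W.leadingCoeff)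
    (P : Polynomial ℝ) :
    Tendsto (fun y => P.eval y * Real.exp (-W.eval y)) atBot (nhds 0) := by
  obtain ⟨h2', hlc'⟩ := refl_props hEven h2 hlc
  have := (tendsto_top h2' hlc' (P.comp (-X))).comp tendsto_neg_atBot_atTop
  refine this.congr fun y => ?_
  simp [eval_comp]

lemma eventually_bound_bot (hEven : Even W.natDegree) (h2 : 2 ≤ W.natDegree)
    (hlc : 0 < W.leadingCoeff) (P : Polynomial ℝ) :
    ∀ᶠ y in atBot, ‖P.eval y * Real.exp (-W.eval y)‖ ≤ Real.exp y := by
  obtain ⟨h2', hlc'⟩ := refl_props hEven h2 hlc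
  have := tendsto_neg_atBot_atTop.eventually (eventually_bound h2' hlc' (P.comp (-X)))
  filter_upwards [this] with y hy
  simpa [eval_comp] using hy

/-- Integrability of `P(y) e^{-W(y)}`. -/
lemma integrable_poly_exp (hEven : Even W.natDegree) (h2 : 2 ≤ W.natDegree)
    (hlc : 0 < W.leadingCoeff) (P : Polynomial ℝ) :
    Integrable (fun y => P.eval y * Real.exp (-W.eval y)) := by
  set g := fun y => P.eval y * Real.exp (-W.eval y) with hg
  have hcont : Continuous g := (P.continuous).mul ((W.continuous).neg.rexp)
  obtain ⟨R1, hR1⟩ := eventually_atTop.mp (eventually_bound h2 hlc P)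
  obtain ⟨R2, hR2⟩ := eventually_atBot.mp (eventually_bound_bot hEven h2 hlc P)
  have hIoi : IntegrableOn g (Ioi R1) := by
    refine Integrable.mono (exp_neg_integrableOn_Ioi R1 one_pos)
      hcont.aestronglyMeasurable.restrict ?_
    filter_upwards [ae_restrict_mem measurableSet_Ioi] with y hy
    calc ‖g y‖ ≤ Real.exp (-y) := hR1 y (le_of_lt hy)
      _ ≤ ‖Real.exp (-1 * y)‖ := by rw [Real.norm_eq_abs, abs_of_pos (Real.exp_pos _)]; simp
  have hIic : IntegrableOn g (Iic R2) := by
    refine Integrable.mono (integrableOn_exp_Iic R2) hcont.aestronglyMeasurable.restrict ?_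
    filter_upwards [ae_restrict_mem measurableSet_Iic] with y hy
    calc ‖g y‖ ≤ Real.exp y := hR2 y hy
      _ ≤ ‖Real.exp y‖ := le_abs_self _
  set b := max R1 R2 with hb
  have hIcc : IntegrableOn g (Icc R2 b) := hcont.continuousOn.integrableOn_Icc
  have hIoi' : IntegrableOn g (Ioi b) := hIoi.mono_set (Ioi_subset_Ioi (le_max_left _ _))
  have : IntegrableOn g univ := by
    refine ((hIic.union hIcc).union hIoi').mono_set fun y _ => ?_
    rcases le_total y R2 with h | h
    · exact Or.inl (Or.inl h)
    · rcases le_or_gt y b with h' | h'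
      · exact Or.inl (Or.inr ⟨h, h'⟩)
      · exact Or.inr h'
  rwa [integrableOn_univ] at this

end Aux

section Deriv

variable (V : Polynomial ℝ) (j : ℕ)

lemma hasDerivAt_aux (y : ℝ) :
    HasDerivAt (fun y => y ^ j * Real.exp (-V.eval y))
      ((piPoly V j).eval y * Real.exp (-V.eval y)) y := by
  have h1 : HasDerivAt (fun y : ℝ => y ^ j) ((j : ℝ) * y ^ (j - 1)) y := hasDerivAt_pow j y
  have h2 : HasDerivAt (fun y => Real.exp (-V.eval y))
      (Real.exp (-V.eval y) * -(V.derivative.eval y)) y := ((V.hasDerivAt y).neg).exp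
  have : HasDerivAt (fun y => y ^ j * Real.exp (-V.eval y)) _ y := h1.mul h2
  convert this using 1
  simp only [piPoly, eval_sub, eval_mul, eval_pow, eval_X, eval_C, eval_natCast]
  ring

end Deriv

/-- The key inner integral computation. -/
lemma inner_integral (V : Polynomial ℝ) (hEven : Even V.natDegree)
    (hdeg : 2 ≤ V.natDegree) (hlc : 0 < V.leadingCoeff) (j : ℕ) (x : ℝ) :
    ∫ y : ℝ, (piPoly V j).eval y * Real.sign (x - y) * Real.exp (-V.eval y)
      = 2 * (x ^ j * Real.exp (-V.eval x)) := by
  set g := fun y : ℝ => y ^ j * Real.exp (-V.eval y) with hgdef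
  set g' := fun y : ℝ => (piPoly V j).eval y * Real.exp (-V.eval y) with hg'def
  set F := fun y : ℝ => (piPoly V j).eval y * Real.sign (x - y) * Real.exp (-V.eval y) with hFdef
  have hInt : Integrable g' := integrable_poly_exp hEven hdeg hlc (piPoly V j)
  have hXj : ∀ y : ℝ, ((X : Polynomial ℝ) ^ j).eval y = y ^ j := by intro y; simp
  have h_top : Tendsto g atTop (nhds 0) := by
    have := tendsto_top hdeg hlc ((X : Polynomial ℝ) ^ j)
    exact this.congr fun y => by rw [hXj]
  have h_bot : Tendsto g atBot (nhds 0) := by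
    have := tendsto_bot hEven hdeg hlc ((X : Polynomial ℝ) ^ j)
    exact this.congr fun y => by rw [hXj]
  have hA : ∫ y in Ioi x, g' y = 0 - g x :=
    integral_Ioi_of_hasDerivAt_of_tendsto' (fun t _ => hasDerivAt_aux V j t)
      hInt.integrableOn h_top
  have hB : ∫ y in Iic x, g' y = g x - 0 :=
    integral_Iic_of_hasDerivAt_of_tendsto' (fun t _ => hasDerivAt_aux V j t)
      hInt.integrableOn h_bot
  have hFmeas : AEStronglyMeasurable F := by
    apply AEStronglyMeasurable.mul
    apply AEStronglyMeasurable.mul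
    · exact (Polynomial.continuous _).aestronglyMeasurable
    · exact (measurable_realSign.comp (measurable_const.sub measurable_id)).aestronglyMeasurable
    · exact ((V.continuous).neg.rexp).aestronglyMeasurable
  have hFint : Integrable F := by
    refine hInt.norm.mono' hFmeas ?_
    filter_upwards with y
    rw [hFdef]
    simp only [norm_mul, Real.norm_eq_abs, norm_norm]
    calc |(piPoly V j).eval y| * |Real.sign (x - y)| * |Real.exp (-V.eval y)|
        ≤ |(piPoly V j).eval y| * 1 * |Real.exp (-V.eval y)| := by
          apply mul_le_mul_of_nonneg_right (mul_le_mul_of_nonneg_left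
            (abs_realSign_le _) (abs_nonneg _)) (abs_nonneg _)
      _ = ‖(piPoly V j).eval y * Real.exp (-V.eval y)‖ := by
          rw [mul_one]; rw [norm_mul]; simp [Real.norm_eq_abs]
  have hsplit : ∫ y, F y = (∫ y in Iic x, F y) + ∫ y in Ioi x, F y := by
    have h := integral_add_compl (measurableSet_Iic (a := x)) hFint
    rw [compl_Iic] at h
    exact h.symm
  have hae : ∀ᵐ y : ℝ, y ≠ x := by
    have : (volume : Measure ℝ) {x} = 0 := measure_singleton x
    filter_upwards [measure_eq_zero_iff_ae_notMem.mp this] with y hy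
    simpa using hy
  have hIicF : ∫ y in Iic x, F y = ∫ y in Iic x, g' y := by
    apply setIntegral_congr_ae measurableSet_Iic
    filter_upwards [hae] with y hy hyx
    have : y < x := lt_of_le_of_ne hyx hy
    rw [hFdef, hg'def]
    simp only
    rw [Real.sign_of_pos (by linarith : 0 < x - y)]
    ring
  have hIoiF : ∫ y in Ioi x, F y = ∫ y in Ioi x, -g' y := by
    apply setIntegral_congr_ae measurableSet_Ioi
    filter_upwards with y hyx
    have : x < y := hyx
    rw [hFdef, hg'def]
    simp only
    rw [Real.sign_of_neg (by linarith : x - y < 0)]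
    ring
  rw [hsplit, hIicF, hIoiF, integral_neg, hA, hB]
  ring

/-- For every polynomial `f` and every `j ≥ 0`, `⟨f, π_{j+d−1}⟩₁ = 2 ⟨f, x^j⟩₂`. -/
theorem skewInner_piPoly (V : Polynomial ℝ) (hEven : Even V.natDegree)
    (hdeg : 2 ≤ V.natDegree) (hlc : 0 < V.leadingCoeff)
    (f : Polynomial ℝ) (j : ℕ) :
    skewInner V f (piPoly V j) = 2 * innerTwo V f (X ^ j) := by
  set G : ℝ × ℝ → ℝ := fun p => f.eval p.1 * (piPoly V j).eval p.2 * Real.sign (p.1 - p.2) *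
    Real.exp (-V.eval p.1 - V.eval p.2) with hGdef
  have hf : Integrable (fun x => f.eval x * Real.exp (-V.eval x)) :=
    integrable_poly_exp hEven hdeg hlc f
  have hpi : Integrable (fun y => (piPoly V j).eval y * Real.exp (-V.eval y)) :=
    integrable_poly_exp hEven hdeg hlc (piPoly V j)
  have hprod : Integrable (fun p : ℝ × ℝ =>
      ‖f.eval p.1 * Real.exp (-V.eval p.1)‖ * ‖(piPoly V j).eval p.2 * Real.exp (-V.eval p.2)‖)
      (volume : Measure (ℝ × ℝ)) := by
    rw [Measure.volume_eq_prod ℝ ℝ]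
    exact hf.norm.mul_prod hpi.norm
  have hGmeas : AEStronglyMeasurable G (volume : Measure (ℝ × ℝ)) := by
    apply AEStronglyMeasurable.mul
    apply AEStronglyMeasurable.mul
    apply AEStronglyMeasurable.mul
    · exact ((f.continuous).comp continuous_fst).aestronglyMeasurable
    · exact (((piPoly V j).continuous).comp continuous_snd).aestronglyMeasurable
    · exact (measurable_realSign.comp (measurable_fst.sub measurable_snd)).aestronglyMeasurable
    · exact (((V.continuous.comp continuous_fst).neg.sub
        (V.continuous.comp continuous_snd)).rexp).aestronglyMeasurable
  have hGint : Integrable G (volume : Measure (ℝ × ℝ)) := by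
    refine hprod.mono' hGmeas ?_
    filter_upwards with p
    rw [hGdef]
    simp only [norm_mul, Real.norm_eq_abs, norm_norm]
    have hexp : Real.exp (-V.eval p.1 - V.eval p.2)
        = Real.exp (-V.eval p.1) * Real.exp (-V.eval p.2) := by
      rw [← Real.exp_add]; ring_nf
    rw [hexp]; simp only [abs_mul]
    have h3 := abs_realSign_le (p.1 - p.2)
    calc |f.eval p.1| * |(piPoly V j).eval p.2| * |Real.sign (p.1 - p.2)| *
          (|Real.exp (-V.eval p.1)| * |Real.exp (-V.eval p.2)|)
        ≤ |f.eval p.1| * |(piPoly V j).eval p.2| * 1 *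
          (|Real.exp (-V.eval p.1)| * |Real.exp (-V.eval p.2)|) := by gcongr
      _ = |f.eval p.1| * |Real.exp (-V.eval p.1)| *
          (|(piPoly V j).eval p.2| * |Real.exp (-V.eval p.2)|) := by ring
  have hFub : skewInner V f (piPoly V j)
      = ∫ x : ℝ, ∫ y : ℝ, G (x, y) := by
    rw [skewInner, Measure.volume_eq_prod ℝ ℝ]
    rw [Measure.volume_eq_prod ℝ ℝ] at hGint
    exact integral_prod G hGint
  rw [hFub]
  have hinner : ∀ x : ℝ, (∫ y : ℝ, G (x, y))
      = f.eval x * Real.exp (-V.eval x) * (2 * (x ^ j * Real.exp (-V.eval x))) := by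
    intro x
    have : ∀ y : ℝ, G (x, y) = (f.eval x * Real.exp (-V.eval x)) *
        ((piPoly V j).eval y * Real.sign (x - y) * Real.exp (-V.eval y)) := by
      intro y
      rw [hGdef]
      simp only
      rw [show Real.exp (-V.eval x - V.eval y) = Real.exp (-V.eval x) * Real.exp (-V.eval y) by
        rw [← Real.exp_add]; ring_nf]
      ring
    simp_rw [this]
    rw [integral_const_mul, inner_integral V hEven hdeg hlc j x]
  simp_rw [hinner]
  rw [innerTwo, ← integral_const_mul]
  congr 1
  funext x
  have hE : Real.exp (-V.eval x) * Real.exp (-V.eval x) = Real.exp (-2 * V.eval x) := by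
    rw [← Real.exp_add]; ring_nf
  simp only [eval_pow, eval_X]
  rw [← hE]
  ring
end
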